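/- There exist constants C > 0 and δ > 0 such that for all α > 0 and Δ > 0 with αΔ < δ, the aliased Matérn spectral density with ν = 3/2, d = 1 evaluated at the highest frequency 1/(2Δ) satisfies | M_Δ(1/(2Δ); 3/2, 1)/(4/α) − α⁴Δ⁴/48 + α⁶Δ⁶/240 | ≤ C α⁸Δ⁸. In particular M_Δ(1/(2Δ); 3/2, 1)/(4/α) = α⁴Δ⁴/48 + O(α⁶Δ⁶) as αΔ → 0. -/

import Mathlib

/-!
Substituting `t = αΔ`, the summand at `ω = 1/(2Δ)` divided by `4/α` becomes
`t⁴ / (t² + a_k)²` with `a_k = (π(2k+1))²`. Expanding in `t²`,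
`t⁴/(t² + a)² = t⁴/a² - 2t⁶/a³ + R(t, a)` with `0 ≤ R(t, a) ≤ 5t⁸/a²` once `t² ≤ 1 ≤ a`.
The two leading sums are odd-integer zeta values:
`∑ 1/a_k² = 2(1 - 2⁻⁴)ζ(4)/π⁴ = 1/48` and `∑ 1/a_k³ = 2(1 - 2⁻⁶)ζ(6)/π⁶ = 1/480`,
while the remainder sums to at most `5t⁸/48`; so `C = 5/48` and `δ = 1` work.
-/

open Real

theorem bernoulli'_five : bernoulli' 5 = 0 := by
  have h52 : Nat.choose 5 2 = 10 := by decide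
  rw [bernoulli'_def]
  norm_num [Finset.sum_range_succ, h52]

theorem bernoulli'_six : bernoulli' 6 = 1 / 42 := by
  have h62 : Nat.choose 6 2 = 15 := by decide
  have h63 : Nat.choose 6 3 = 20 := by decide
  have h64 : Nat.choose 6 4 = 15 := by decide
  rw [bernoulli'_def]
  norm_num [Finset.sum_range_succ, h62, h63, h64, bernoulli'_five]

theorem hasSum_zeta_six : HasSum (fun n : ℕ => (1 : ℝ) / (n : ℝ) ^ 6) (π ^ 6 / 945) := by
  convert hasSum_zeta_nat three_ne_zero using 1
  rw [bernoulli_eq_bernoulli'_of_ne_one (by norm_num), bernoulli'_six]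
  norm_num [Nat.factorial]
  ring

theorem hasSum_one_div_odd_pow {p : ℕ} {L : ℝ}
    (hL : HasSum (fun n : ℕ => (1 : ℝ) / (n : ℝ) ^ p) L) :
    HasSum (fun n : ℕ => (1 : ℝ) / (2 * (n : ℝ) + 1) ^ p) ((1 - 1 / 2 ^ p) * L) := by
  have heven : HasSum (fun n : ℕ => (1 : ℝ) / ((2 * n : ℕ) : ℝ) ^ p) (1 / 2 ^ p * L) :=
    (hL.mul_left (1 / 2 ^ p)).congr_fun fun n => by
      rw [Nat.cast_mul, Nat.cast_ofNat, mul_pow, one_div_mul_one_div]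
  have hodd : HasSum (fun n : ℕ => (1 : ℝ) / ((2 * n + 1 : ℕ) : ℝ) ^ p)
      (∑' n, 1 / ((2 * n + 1 : ℕ) : ℝ) ^ p) :=
    (hL.summable.comp_injective fun a b h => by simpa using h).hasSum
  have hsplit :=
    (HasSum.even_add_odd (f := fun n : ℕ => (1 : ℝ) / (n : ℝ) ^ p) heven hodd).unique hL
  rw [show (1 - 1 / 2 ^ p) * L = ∑' n, 1 / ((2 * n + 1 : ℕ) : ℝ) ^ p by linarith]
  exact hodd.congr_fun fun n => by push_cast; rfl

theorem hasSum_int_one_div_odd_pow {m : ℕ} {s : ℝ}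
    (hs : HasSum (fun n : ℕ => (1 : ℝ) / (2 * (n : ℝ) + 1) ^ (2 * m)) s) :
    HasSum (fun k : ℤ => (1 : ℝ) / (2 * (k : ℝ) + 1) ^ (2 * m)) (2 * s) := by
  have hnat : HasSum (fun n : ℕ => (1 : ℝ) / (2 * ((n : ℤ) : ℝ) + 1) ^ (2 * m)) s :=
    hs.congr_fun fun n => by push_cast; rfl
  have hneg : HasSum (fun n : ℕ => (1 : ℝ) / (2 * ((-(n + 1) : ℤ) : ℝ) + 1) ^ (2 * m)) s :=
    hs.congr_fun fun n => by
      push_cast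
      rw [show 2 * (-((n : ℝ) + 1)) + 1 = -(2 * n + 1) by ring, (even_two_mul m).neg_pow]
  rw [two_mul s]
  exact HasSum.of_nat_of_neg_add_one (f := fun k : ℤ => (1 : ℝ) / (2 * (k : ℝ) + 1) ^ (2 * m))
    hnat hneg

noncomputable def oddPiSq (k : ℤ) : ℝ := (π * (2 * k + 1)) ^ 2

theorem one_le_oddPiSq (k : ℤ) : 1 ≤ oddPiSq k := by
  have hk : (1 : ℝ) ≤ |2 * (k : ℝ) + 1| := by
    exact_mod_cast Int.one_le_abs (by omega : 2 * k + 1 ≠ 0)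
  have h : 1 ≤ |π * (2 * k + 1)| := by
    rw [abs_mul, abs_of_pos pi_pos]
    nlinarith [pi_gt_three]
  rw [oddPiSq, ← sq_abs]
  exact one_le_pow₀ h

theorem oddPiSq_pos (k : ℤ) : 0 < oddPiSq k :=
  one_pos.trans_le (one_le_oddPiSq k)

theorem hasSum_one_div_oddPiSq_pow {m : ℕ} {s : ℝ}
    (hs : HasSum (fun n : ℕ => (1 : ℝ) / (2 * (n : ℝ) + 1) ^ (2 * m)) s) :
    HasSum (fun k => 1 / oddPiSq k ^ m) (2 * s / π ^ (2 * m)) :=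
  ((hasSum_int_one_div_odd_pow hs).div_const (π ^ (2 * m))).congr_fun fun k => by
    rw [oddPiSq, ← pow_mul, mul_pow, div_div, mul_comm]

theorem hasSum_one_div_oddPiSq_sq : HasSum (fun k => 1 / oddPiSq k ^ 2) (1 / 48) := by
  have h := hasSum_one_div_oddPiSq_pow (m := 2) (hasSum_one_div_odd_pow hasSum_zeta_four)
  rwa [show 2 * ((1 - 1 / 2 ^ (2 * 2)) * (π ^ 4 / 90)) / π ^ (2 * 2) = (1 / 48 : ℝ) by
    field_simp; ring] at h

theorem hasSum_one_div_oddPiSq_cube : HasSum (fun k => 1 / oddPiSq k ^ 3) (1 / 480) := by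
  have h := hasSum_one_div_oddPiSq_pow (m := 3) (hasSum_one_div_odd_pow hasSum_zeta_six)
  rwa [show 2 * ((1 - 1 / 2 ^ (2 * 3)) * (π ^ 6 / 945)) / π ^ (2 * 3) = (1 / 480 : ℝ) by
    field_simp; ring] at h

noncomputable def taylorRemainder (t a : ℝ) : ℝ :=
  t ^ 8 * (3 * a + 2 * t ^ 2) / (a ^ 3 * (t ^ 2 + a) ^ 2)

theorem pow_four_div_sq_add_eq (t : ℝ) {a : ℝ} (ha : 0 < a) :
    t ^ 4 / (t ^ 2 + a) ^ 2 = t ^ 4 / a ^ 2 - 2 * t ^ 6 / a ^ 3 + taylorRemainder t a := by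
  have : 0 < t ^ 2 + a := by positivity
  rw [taylorRemainder]
  field_simp
  ring

theorem taylorRemainder_nonneg (t : ℝ) {a : ℝ} (ha : 0 ≤ a) : 0 ≤ taylorRemainder t a := by
  unfold taylorRemainder
  positivity

theorem taylorRemainder_le {t a : ℝ} (ht : t ^ 2 ≤ 1) (ha : 1 ≤ a) :
    taylorRemainder t a ≤ 5 * t ^ 8 / a ^ 2 := by
  have ha0 : 0 < a := one_pos.trans_le ha
  calc taylorRemainder t a ≤ t ^ 8 * (5 * a) / (a ^ 3 * a ^ 2) := by
        unfold taylorRemainder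
        gcongr
        · linarith
        · exact le_add_of_nonneg_left (sq_nonneg t)
    _ = 5 * t ^ 8 / a ^ 4 := by field_simp
    _ ≤ 5 * t ^ 8 / a ^ 2 := by gcongr; norm_num

theorem summable_nyquist (t : ℝ) : Summable fun k => t ^ 4 / (t ^ 2 + oddPiSq k) ^ 2 := by
  refine Summable.of_nonneg_of_le (fun k => by positivity) (fun k => ?_)
    (hasSum_one_div_oddPiSq_sq.summable.mul_left (t ^ 4))
  have := oddPiSq_pos k
  rw [mul_one_div]
  gcongr
  exact le_add_of_nonneg_left (sq_nonneg t)

theorem summable_taylorRemainder_oddPiSq (t : ℝ) :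
    Summable fun k => taylorRemainder t (oddPiSq k) := by
  have hlead := (hasSum_one_div_oddPiSq_sq.summable.mul_left (t ^ 4)).sub
    (hasSum_one_div_oddPiSq_cube.summable.mul_left (2 * t ^ 6))
  refine ((summable_nyquist t).sub hlead).congr fun k => ?_
  rw [pow_four_div_sq_add_eq t (oddPiSq_pos k)]
  ring

theorem hasSum_nyquist (t : ℝ) :
    HasSum (fun k => t ^ 4 / (t ^ 2 + oddPiSq k) ^ 2)
      (t ^ 4 / 48 - t ^ 6 / 240 + ∑' k, taylorRemainder t (oddPiSq k)) := by
  have hlead := (hasSum_one_div_oddPiSq_sq.mul_left (t ^ 4)).sub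
    (hasSum_one_div_oddPiSq_cube.mul_left (2 * t ^ 6))
  rw [show t ^ 4 / 48 - t ^ 6 / 240 = t ^ 4 * (1 / 48) - 2 * t ^ 6 * (1 / 480) by ring]
  refine (hlead.add (summable_taylorRemainder_oddPiSq t).hasSum).congr_fun fun k => ?_
  rw [pow_four_div_sq_add_eq t (oddPiSq_pos k)]
  ring

theorem abs_tsum_nyquist_sub_le {t : ℝ} (ht : t ^ 2 ≤ 1) :
    |∑' k, t ^ 4 / (t ^ 2 + oddPiSq k) ^ 2 - t ^ 4 / 48 + t ^ 6 / 240| ≤ 5 / 48 * t ^ 8 := by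
  have hbound := hasSum_one_div_oddPiSq_sq.mul_left (5 * t ^ 8)
  have hrem := summable_taylorRemainder_oddPiSq t
  have herr : ∑' k, t ^ 4 / (t ^ 2 + oddPiSq k) ^ 2 - t ^ 4 / 48 + t ^ 6 / 240
      = ∑' k, taylorRemainder t (oddPiSq k) := by
    rw [(hasSum_nyquist t).tsum_eq]
    ring
  rw [herr, abs_of_nonneg (tsum_nonneg fun k => taylorRemainder_nonneg t (oddPiSq_pos k).le)]
  calc ∑' k, taylorRemainder t (oddPiSq k) ≤ ∑' k, 5 * t ^ 8 * (1 / oddPiSq k ^ 2) :=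
        hrem.tsum_le_tsum (fun k => by
          rw [mul_one_div]; exact taylorRemainder_le ht (one_le_oddPiSq k)) hbound.summable
    _ = 5 / 48 * t ^ 8 := by rw [hbound.tsum_eq]; ring

theorem matern_summand_nyquist_div_eq (α : ℝ) {Δ : ℝ} (hΔ : Δ ≠ 0) (k : ℤ) :
    4 * α ^ 3 / (α ^ 2 + 4 * π ^ 2 * (1 / (2 * Δ) + (k : ℝ) / Δ) ^ 2) ^ 2 / (4 / α)
      = (α * Δ) ^ 4 / ((α * Δ) ^ 2 + oddPiSq k) ^ 2 := by
  have hden : α ^ 2 + 4 * π ^ 2 * (1 / (2 * Δ) + (k : ℝ) / Δ) ^ 2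
      = ((α * Δ) ^ 2 + oddPiSq k) / Δ ^ 2 := by
    rw [oddPiSq]; field_simp; ring
  rw [hden]
  have : 0 < (α * Δ) ^ 2 + oddPiSq k := by
    have := oddPiSq_pos k; positivity
  field_simp

theorem matern_threehalves_d1_nyquist_expansion :
    ∃ C > (0 : ℝ), ∃ δ > (0 : ℝ), ∀ α Δ : ℝ, 0 < α → 0 < Δ → α * Δ < δ →
      |(∑' k : ℤ,
            4 * α ^ 3 / (α ^ 2 + 4 * π ^ 2 * (1 / (2 * Δ) + (k : ℝ) / Δ) ^ 2) ^ 2) / (4 / α)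
          - α ^ 4 * Δ ^ 4 / 48 + α ^ 6 * Δ ^ 6 / 240|
        ≤ C * α ^ 8 * Δ ^ 8 := by
  refine ⟨5 / 48, by norm_num, 1, one_pos, fun α Δ hα hΔ hαΔ => ?_⟩
  have ht : (α * Δ) ^ 2 ≤ 1 := by nlinarith [mul_pos hα hΔ]
  rw [← tsum_div_const]
  simp_rw [matern_summand_nyquist_div_eq α hΔ.ne']
  calc _ = |∑' k, (α * Δ) ^ 4 / ((α * Δ) ^ 2 + oddPiSq k) ^ 2 - (α * Δ) ^ 4 / 48
          + (α * Δ) ^ 6 / 240| := by ring_nf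
    _ ≤ 5 / 48 * (α * Δ) ^ 8 := abs_tsum_nyquist_sub_le ht
    _ = 5 / 48 * α ^ 8 * Δ ^ 8 := by ring
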